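/- Let G be a graph on vertex set V where each vertex v has a degree bound B_v ≤ N = |V|, and let G' be the augmented graph obtained by attaching N - B_v new pendant (degree-1) auxiliary vertices to each vertex v. Then G has a spanning tree in which every vertex v has degree at most B_v if and only if G' has a spanning tree of maximum degree at most N. -/

import Mathlib

/-!
Attaching the pendant vertices, `T ↦ augmented T B N`, is a bijection from the subgraphs of `G`
onto the subgraphs of `G'` that contain every pendant edge, with inverse restriction to `V`.
It preserves and reflects being a tree: walks in `augmented T B N` project to walks in `T` by
forgetting pendant detours, and pendant edges are bridges. It turns `deg_T v ≤ B v` into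
`deg v ≤ N`, since `v` gains exactly `N - B v` pendant neighbours. Finally, a spanning tree of
`G'` contains every pendant edge, the only edge of `G'` at its pendant vertex.
-/

/-- The augmented graph: attach `N - B v` new pendant auxiliary vertices to each
vertex `v` of `G`. -/
def augmented {V : Type*} (G : SimpleGraph V) (B : V → ℕ) (N : ℕ) :
    SimpleGraph (V ⊕ (Σ v : V, Fin (N - B v))) :=
  SimpleGraph.fromRel (fun a b =>
    match a, b with
    | Sum.inl u, Sum.inl v => G.Adj u v
    | Sum.inl u, Sum.inr w => u = w.1
    | _, _ => False)

open SimpleGraph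

namespace SimpleGraph

variable {V : Type*} {G : SimpleGraph V} {p q : V}

lemma Reachable.adj_of_forall_adj_eq (hr : G.Reachable p q) (hpq : p ≠ q)
    (h : ∀ x, G.Adj p x → x = q) : G.Adj p q := by
  obtain ⟨_ | ⟨hpx, _⟩⟩ := hr
  · exact absurd rfl hpq
  · exact h _ hpx ▸ hpx

lemma isBridge_of_forall_adj_eq (hpq : G.Adj p q) (h : ∀ x, G.Adj p x → x = q) :
    G.IsBridge s(p, q) := by
  intro hr
  have hadj := hr.adj_of_forall_adj_eq hpq.ne fun x hx => h x (deleteEdges_le _ hx)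
  simp at hadj

end SimpleGraph

section Augmented

variable {V : Type*} {H : SimpleGraph V} {B : V → ℕ} {N : ℕ}

@[simp] lemma augmented_adj_inl_inl {u v : V} :
    (augmented H B N).Adj (.inl u) (.inl v) ↔ H.Adj u v := by
  simp only [augmented, fromRel_adj, ne_eq, Sum.inl.injEq]
  exact ⟨fun ⟨_, h⟩ => h.elim id .symm, fun h => ⟨h.ne, .inl h⟩⟩

@[simp] lemma augmented_adj_inl_inr {u : V} {w : Σ v : V, Fin (N - B v)} :
    (augmented H B N).Adj (.inl u) (.inr w) ↔ u = w.1 := by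
  simp [augmented]

@[simp] lemma augmented_adj_inr_inl {u : V} {w : Σ v : V, Fin (N - B v)} :
    (augmented H B N).Adj (.inr w) (.inl u) ↔ w.1 = u := by
  rw [adj_comm, augmented_adj_inl_inr, eq_comm]

@[simp] lemma augmented_adj_inr_inr {w w' : Σ v : V, Fin (N - B v)} :
    ¬ (augmented H B N).Adj (.inr w) (.inr w') := by
  simp [augmented]

lemma augmented_mono {H' : SimpleGraph V} (h : H ≤ H') :
    augmented H B N ≤ augmented H' B N := by
  rintro (u | w) (v | w') hadj
  · simpa using h (by simpa using hadj)
  all_goals simp_all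

def augmentedInl : H →g augmented H B N := ⟨Sum.inl, augmented_adj_inl_inl.mpr⟩

lemma reachable_augmented_iff {x y : V ⊕ (Σ v : V, Fin (N - B v))} :
    (augmented H B N).Reachable x y ↔
      H.Reachable (Sum.elim id Sigma.fst x) (Sum.elim id Sigma.fst y) := by
  constructor
  · simp only [reachable_iff_reflTransGen]
    refine fun h => Relation.ReflTransGen.lift' (Sum.elim id Sigma.fst) ?_ _ _ h
    rintro (u | w) (v | w') hadj <;>
      simp_all [Function.onFun, Relation.ReflTransGen.single, Relation.ReflTransGen.refl]
  · have hbase : ∀ x : V ⊕ (Σ v : V, Fin (N - B v)),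
        (augmented H B N).Reachable x (.inl (Sum.elim id Sigma.fst x)) := by
      rintro (u | w)
      · rfl
      · exact Adj.reachable (by simp)
    exact fun h => (hbase x).trans ((h.map augmentedInl).trans (hbase y).symm)

lemma connected_augmented_iff : (augmented H B N).Connected ↔ H.Connected := by
  simp only [connected_iff, Preconnected, reachable_augmented_iff]
  constructor
  · rintro ⟨h, ⟨x⟩⟩
    exact ⟨fun u v => h (.inl u) (.inl v), ⟨Sum.elim id Sigma.fst x⟩⟩
  · rintro ⟨h, ⟨u⟩⟩
    exact ⟨fun _ _ => h _ _, ⟨.inl u⟩⟩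

lemma deleteEdges_augmented {u v : V} :
    (augmented H B N).deleteEdges {s(.inl u, .inl v)} =
      augmented (H.deleteEdges {s(u, v)}) B N := by
  ext (u' | w) (v' | w') <;> simp

lemma isAcyclic_augmented_iff : (augmented H B N).IsAcyclic ↔ H.IsAcyclic := by
  refine ⟨fun h => h.comap augmentedInl Sum.inl_injective, fun h => ?_⟩
  rw [isAcyclic_iff_forall_adj_isBridge]
  rintro (u | w) (v | w') hadj
  · rw [isBridge_iff, deleteEdges_augmented, reachable_augmented_iff]
    exact isBridge_iff.mp (isAcyclic_iff_forall_adj_isBridge.mp h (by simpa using hadj))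
  · rw [Sym2.eq_swap]
    refine isBridge_of_forall_adj_eq hadj.symm fun x hx => ?_
    rcases x with x | x <;> simp_all
  · refine isBridge_of_forall_adj_eq hadj fun x hx => ?_
    rcases x with x | x <;> simp_all
  · simp at hadj

lemma neighborSet_augmented_inl (v : V) :
    (augmented H B N).neighborSet (.inl v) =
      Sum.inl '' H.neighborSet v ∪ Set.range (fun i : Fin (N - B v) => .inr ⟨v, i⟩) := by
  ext (u | ⟨v', i⟩)
  · simp
  · simp only [mem_neighborSet, augmented_adj_inl_inr, Set.mem_union, Set.mem_range]
    constructor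
    · rintro rfl
      exact .inr ⟨i, rfl⟩
    · rintro (⟨_, _, ⟨⟩⟩ | ⟨j, hj⟩)
      exact congrArg Sigma.fst (Sum.inr_injective hj)

lemma neighborSet_augmented_inr (w : Σ v : V, Fin (N - B v)) :
    (augmented H B N).neighborSet (.inr w) = {.inl w.1} := by
  ext (u | w') <;> simp [eq_comm]

lemma ncard_neighborSet_augmented_inl {v : V} (hfin : (H.neighborSet v).Finite) :
    ((augmented H B N).neighborSet (.inl v)).ncard = (H.neighborSet v).ncard + (N - B v) := by
  have hpend : Function.Injective
      (fun i : Fin (N - B v) => (.inr ⟨v, i⟩ : V ⊕ (Σ v : V, Fin (N - B v)))) :=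
    fun i j h => by simpa using h
  rw [neighborSet_augmented_inl, Set.ncard_union_eq ?_ (hfin.image _) (Set.finite_range _),
    Set.ncard_image_of_injective _ Sum.inl_injective, Set.ncard_range_of_injective hpend,
    Nat.card_eq_fintype_card, Fintype.card_fin]
  simp [Set.disjoint_left]

lemma ncard_neighborSet_augmented_inl_le_iff {v : V} (hBN : B v ≤ N) :
    ((augmented H B N).neighborSet (.inl v)).ncard ≤ N ↔ (H.neighborSet v).ncard ≤ B v := by
  by_cases hfin : (H.neighborSet v).Finite
  · rw [ncard_neighborSet_augmented_inl hfin]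
    omega
  · -- both neighbour sets are infinite, so both `ncard`s are the junk value `0`
    have hinf : ((augmented H B N).neighborSet (.inl v)).Infinite := by
      rw [neighborSet_augmented_inl]
      exact ((Set.infinite_image_iff Sum.inl_injective.injOn).mpr hfin).mono Set.subset_union_left
    simp [hinf.ncard, Set.Infinite.ncard hfin]

lemma forall_ncard_neighborSet_augmented_le_iff (hB : ∀ v, 1 ≤ B v ∧ B v ≤ N) :
    (∀ x, ((augmented H B N).neighborSet x).ncard ≤ N) ↔
      ∀ v, (H.neighborSet v).ncard ≤ B v := by
  refine ⟨fun h v => (ncard_neighborSet_augmented_inl_le_iff (hB v).2).mp (h _), ?_⟩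
  rintro h (v | w)
  · exact (ncard_neighborSet_augmented_inl_le_iff (hB v).2).mpr (h v)
  · rw [neighborSet_augmented_inr, Set.ncard_singleton]
    exact (hB w.1).1.trans (hB w.1).2

lemma isTree_augmented_iff : (augmented H B N).IsTree ↔ H.IsTree := by
  rw [isTree_iff, isTree_iff, connected_augmented_iff, isAcyclic_augmented_iff]

lemma eq_augmented_comap_inl {G : SimpleGraph V} {T : SimpleGraph (V ⊕ (Σ v : V, Fin (N - B v)))}
    (hle : T ≤ augmented G B N) (hconn : T.Preconnected) :
    T = augmented (T.comap Sum.inl) B N := by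
  have hpendant : ∀ w : Σ v : V, Fin (N - B v), T.Adj (.inr w) (.inl w.1) := fun w =>
    (hconn _ _).adj_of_forall_adj_eq (by simp) fun x hx => by
      rcases x with u | w' <;> simpa [eq_comm] using hle hx
  ext (u | w) (v | w')
  · simp
  · simpa [eq_comm] using
      ⟨fun h => by simpa [eq_comm] using hle h, fun h => h ▸ (hpendant w').symm⟩
  · simpa using ⟨fun h => by simpa using hle h, fun h => h ▸ hpendant w⟩
  · simpa using fun h => by simpa using hle h

end Augmented

theorem stmt4_general {V : Type*} (G : SimpleGraph V) (B : V → ℕ) (N : ℕ)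
    (hB : ∀ v, 1 ≤ B v ∧ B v ≤ N) :
    (∃ T : SimpleGraph V, T ≤ G ∧ T.IsTree ∧ ∀ v, (T.neighborSet v).ncard ≤ B v) ↔
    (∃ T' : SimpleGraph (V ⊕ (Σ v : V, Fin (N - B v))),
      T' ≤ augmented G B N ∧ T'.IsTree ∧ ∀ x, (T'.neighborSet x).ncard ≤ N) := by
  constructor
  · rintro ⟨T, hle, htree, hdeg⟩
    exact ⟨augmented T B N, augmented_mono hle, isTree_augmented_iff.mpr htree,
      (forall_ncard_neighborSet_augmented_le_iff hB).mpr hdeg⟩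
  · rintro ⟨T', hle, htree, hdeg⟩
    have hT' := eq_augmented_comap_inl hle htree.connected.preconnected
    rw [hT'] at htree hdeg
    exact ⟨T'.comap Sum.inl, fun u v h => by simpa using hle h, isTree_augmented_iff.mp htree,
      (forall_ncard_neighborSet_augmented_le_iff hB).mp hdeg⟩

/-- `G` has a spanning tree in which every vertex `v` has degree at most `B v`
iff the augmented graph has a spanning tree of maximum degree at most `N = |V|`. -/
theorem stmt4 {V : Type*} [Fintype V] (G : SimpleGraph V) (B : V → ℕ) (N : ℕ)
    (hN : Fintype.card V = N) (hconn : G.Connected)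
    (hB : ∀ v, 1 ≤ B v ∧ B v ≤ N) :
    (∃ T : SimpleGraph V, T ≤ G ∧ T.IsTree ∧ ∀ v, (T.neighborSet v).ncard ≤ B v) ↔
    (∃ T' : SimpleGraph (V ⊕ (Σ v : V, Fin (N - B v))),
      T' ≤ augmented G B N ∧ T'.IsTree ∧ ∀ x, (T'.neighborSet x).ncard ≤ N) :=
  stmt4_general G B N hB
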